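/- For every r ∈ [−1,1] there exists a probability space carrying random variables U₁, U₂, U₃, each uniformly distributed on [0,1], such that all pairwise Spearman rank correlations are zero (E[(U_i−1/2)(U_j−1/2)] = 0 for i ≠ j) and the standardized rank coskewness equals r (32·E[(U₁−1/2)(U₂−1/2)(U₃−1/2)] = r). -/

import Mathlib

/-!
Let `T` be uniform on `[0,1]` and let `s₁, s₂, s₃` be fair random signs independent of `T`.
Each `Uᵢ = 1/2 + sᵢ T / 2` is then uniform on `[0,1]`, and independence of `T` from the signs
gives `E[(Uᵢ - 1/2)(Uⱼ - 1/2)] = E[sᵢ sⱼ] E[T²] / 4 = E[sᵢ sⱼ] / 12` and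
`32 E[(U₁ - 1/2)(U₂ - 1/2)(U₃ - 1/2)] = 4 E[s₁ s₂ s₃] E[T³] = E[s₁ s₂ s₃]`.
So it suffices to find fair, pairwise uncorrelated signs with `E[s₁ s₂ s₃] = r`: take independent
fair signs `s₁, s₂` and `s₃ = s₁ s₂ c` for a third independent sign `c` of mean `r`.
-/

open MeasureTheory ProbabilityTheory unitInterval

local notation "𝕌" => (volume.restrict (Set.Icc (0 : ℝ) 1) : Measure ℝ)

instance : IsProbabilityMeasure 𝕌 := ⟨by simp [Real.volume_Icc]⟩

lemma map_affine_volume (a b : ℝ) (ha : a ≠ 0) :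
    volume.map (fun t => b + a * t) = ENNReal.ofReal |a⁻¹| • volume := by
  rw [show (fun t => b + a * t) = (b + ·) ∘ (a * ·) from rfl,
    ← Measure.map_map (measurable_const_add b) (measurable_const_mul a),
    Real.map_volume_mul_left ha, Measure.map_smul, map_add_left_eq_self]

lemma map_affine_volume_restrict (a b : ℝ) (ha : a ≠ 0) {s : Set ℝ} (hs : MeasurableSet s) :
    (volume.restrict ((fun t => b + a * t) ⁻¹' s)).map (fun t => b + a * t) =
      ENNReal.ofReal |a⁻¹| • volume.restrict s := by
  rw [← Measure.restrict_map (by fun_prop) hs, map_affine_volume a b ha, Measure.restrict_smul]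

lemma volume_restrict_Icc_add_volume_restrict_Icc {a b c : ℝ} (hab : a ≤ b) (hbc : b ≤ c) :
    volume.restrict (Set.Icc a b) + volume.restrict (Set.Icc b c) =
      volume.restrict (Set.Icc a c) := by
  rw [← Measure.restrict_union_add_inter _ measurableSet_Icc, Set.Icc_union_Icc_eq_Icc hab hbc]
  simp [Set.Icc_inter_Icc, max_eq_right hab, min_eq_left hbc]

lemma integral_pow_uniform (n : ℕ) : ∫ t, t ^ n ∂𝕌 = 1 / (n + 1) := by
  rw [integral_Icc_eq_integral_Ioc, ← intervalIntegral.integral_of_le zero_le_one, integral_pow]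
  simp

section Bernoulli

noncomputable def unitInterval.half : I := ⟨1 / 2, by norm_num, by norm_num⟩

lemma bernoulliMeasure_half {X : Type*} [MeasurableSpace X] (x y : X) :
    Ber(x, y, half) = (2⁻¹ : ENNReal) • (Measure.dirac x + Measure.dirac y) := by
  have h : toNNReal half = 2⁻¹ := by ext; simp [half]
  have h' : toNNReal (σ half) = 2⁻¹ := by ext; simp [half]; norm_num
  rw [bernoulliMeasure_def, h, h', smul_add, ENNReal.smul_def, ENNReal.smul_def]
  simp

/-- The two halves `1/2 ± T/2` fold `[0,1]` onto `[1/2,1]` and `[0,1/2]` with density `2`. -/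
lemma map_bernoulliMeasure_half_prod_uniform :
    ((Ber((1 : ℝ), -1, half)).prod 𝕌).map (fun z => 1 / 2 + z.1 * z.2 / 2) = 𝕌 := by
  have hup : (fun t : ℝ => 1 / 2 + 1 / 2 * t) ⁻¹' Set.Icc (1 / 2) 1 = Set.Icc 0 1 := by
    ext t; simp only [Set.mem_preimage, Set.mem_Icc]
    constructor <;> intro h <;> constructor <;> linarith [h.1, h.2]
  have hdown : (fun t : ℝ => 1 / 2 + -1 / 2 * t) ⁻¹' Set.Icc 0 (1 / 2) = Set.Icc 0 1 := by
    ext t; simp only [Set.mem_preimage, Set.mem_Icc]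
    constructor <;> intro h <;> constructor <;> linarith [h.1, h.2]
  have hmap_up := map_affine_volume_restrict (1 / 2) (1 / 2) (by norm_num)
    (measurableSet_Icc (a := (1 / 2 : ℝ)) (b := 1))
  have hmap_down := map_affine_volume_restrict (-1 / 2) (1 / 2) (by norm_num)
    (measurableSet_Icc (a := (0 : ℝ)) (b := 1 / 2))
  rw [hup] at hmap_up
  rw [hdown] at hmap_down
  have hcomp_up : (fun z : ℝ × ℝ => 1 / 2 + z.1 * z.2 / 2) ∘ Prod.mk 1 =
      fun t => 1 / 2 + 1 / 2 * t := by
    funext t; simp only [Function.comp_apply]; ring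
  have hcomp_down : (fun z : ℝ × ℝ => 1 / 2 + z.1 * z.2 / 2) ∘ Prod.mk (-1) =
      fun t => 1 / 2 + -1 / 2 * t := by
    funext t; simp only [Function.comp_apply]; ring
  have htwo : ENNReal.ofReal |(1 / 2 : ℝ)⁻¹| = 2 := by norm_num
  have htwo' : ENNReal.ofReal |(-1 / 2 : ℝ)⁻¹| = 2 := by norm_num
  rw [bernoulliMeasure_half, Measure.prod_smul_left, Measure.add_prod, Measure.dirac_prod,
    Measure.dirac_prod, Measure.map_smul, Measure.map_add _ _ (by fun_prop),
    Measure.map_map (by fun_prop) (by fun_prop), Measure.map_map (by fun_prop) (by fun_prop),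
    hcomp_up, hcomp_down, hmap_up, hmap_down, htwo, htwo', ← smul_add, smul_smul, add_comm,
    volume_restrict_Icc_add_volume_restrict_Icc (by norm_num) (by norm_num),
    ENNReal.inv_mul_cancel (by norm_num) (by norm_num), one_smul]

variable {Ω : Type*} [MeasurableSpace Ω] {μ : Measure Ω} [IsProbabilityMeasure μ]

lemma map_eq_bernoulliMeasure {X : Type*} [MeasurableSpace X] [MeasurableSingletonClass X]
    {f : Ω → X} (hf : Measurable f) {x y : X} (hxy : x ≠ y) (hf_mem : ∀ ω, f ω = x ∨ f ω = y) :
    μ.map f = Ber(x, y, ⟨μ.real (f ⁻¹' {x}), measureReal_nonneg, measureReal_le_one⟩) := by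
  classical
  have hA : MeasurableSet (f ⁻¹' {x}) := hf (measurableSet_singleton x)
  have hcoe (t : I) : ((toNNReal t : NNReal) : ENNReal) = ENNReal.ofReal t := by
    rw [ENNReal.ofReal, Real.toNNReal_of_nonneg t.2.1]; rfl
  ext B hB
  rw [Measure.map_apply hf hB, bernoulliMeasure_apply _ hB]
  split_ifs with hxB hyB hyB
  · have : f ⁻¹' B = Set.univ :=
      Set.eq_univ_of_forall fun ω => by rcases hf_mem ω with h | h <;> simp [h, hxB, hyB]
    rw [this, measure_univ]
  · have : f ⁻¹' B = f ⁻¹' {x} := by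
      ext ω; rcases hf_mem ω with h | h <;> simp [h, hxB, hyB, hxy.symm]
    rw [this, hcoe, ofReal_measureReal]
  · have : f ⁻¹' B = (f ⁻¹' {x})ᶜ := by
      ext ω; rcases hf_mem ω with h | h <;> simp [h, hxB, hyB, hxy.symm]
    rw [this, hcoe, coe_symm_eq, ← probReal_compl_eq_one_sub hA, ofReal_measureReal]
  · have : f ⁻¹' B = ∅ :=
      Set.eq_empty_of_forall_notMem fun ω => by rcases hf_mem ω with h | h <;> simp [h, hxB, hyB]
    rw [this, measure_empty]

lemma map_eq_bernoulliMeasure_half_of_integral_eq_zero {s : Ω → ℝ} (hs : Measurable s)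
    (hs_sign : ∀ ω, s ω = 1 ∨ s ω = -1) (hs_mean : ∫ ω, s ω ∂μ = 0) :
    μ.map s = Ber(1, -1, half) := by
  have hlaw := map_eq_bernoulliMeasure (μ := μ) hs (by norm_num) hs_sign
  have hmean : ∫ ω, s ω ∂μ = 2 * μ.real (s ⁻¹' {1}) - 1 :=
    calc ∫ ω, s ω ∂μ = ∫ y, y ∂μ.map s :=
          (integral_map hs.aemeasurable aestronglyMeasurable_id).symm
      _ = _ := by rw [hlaw, integral_bernoulliMeasure]; simp; ring
  rw [hlaw]
  congr
  linarith

end Bernoulli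

section SignLift

variable {X : Type*} [MeasurableSpace X] {ν : Measure X} [IsProbabilityMeasure ν]

noncomputable def signLift (s : X → ℝ) (z : X × ℝ) : ℝ := 1 / 2 + s z.1 * z.2 / 2

lemma measurable_signLift {s : X → ℝ} (hs : Measurable s) : Measurable (signLift s) := by
  unfold signLift; fun_prop

lemma map_signLift {s : X → ℝ} (hs : Measurable s) (hs_sign : ∀ x, s x = 1 ∨ s x = -1)
    (hs_mean : ∫ x, s x ∂ν = 0) : (ν.prod 𝕌).map (signLift s) = 𝕌 := by
  have h : signLift s = (fun z : ℝ × ℝ => 1 / 2 + z.1 * z.2 / 2) ∘ Prod.map s id := rfl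
  rw [h, ← Measure.map_map (by fun_prop) (hs.prodMap measurable_id),
    ← Measure.map_prod_map _ _ hs measurable_id,
    map_eq_bernoulliMeasure_half_of_integral_eq_zero hs hs_sign hs_mean, Measure.map_id,
    map_bernoulliMeasure_half_prod_uniform]

lemma integral_signLift_mul (s s' : X → ℝ) :
    ∫ z, (signLift s z - 1 / 2) * (signLift s' z - 1 / 2) ∂ν.prod 𝕌 =
      (∫ x, s x * s' x ∂ν) / 12 :=
  calc _ = ∫ z, (s z.1 * s' z.1) * (z.2 ^ 2 / 4) ∂ν.prod 𝕌 := by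
          congr with z; simp only [signLift]; ring
    _ = (∫ x, s x * s' x ∂ν) * ∫ t, t ^ 2 / 4 ∂𝕌 :=
          integral_prod_mul (fun x => s x * s' x) (fun t => t ^ 2 / 4)
    _ = _ := by rw [integral_div, integral_pow_uniform]; ring

lemma integral_signLift_mul_mul (s s' s'' : X → ℝ) :
    ∫ z, (signLift s z - 1 / 2) * (signLift s' z - 1 / 2) * (signLift s'' z - 1 / 2) ∂ν.prod 𝕌 =
      (∫ x, s x * s' x * s'' x ∂ν) / 32 :=
  calc _ = ∫ z, (s z.1 * s' z.1 * s'' z.1) * (z.2 ^ 3 / 8) ∂ν.prod 𝕌 := by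
          congr with z; simp only [signLift]; ring
    _ = (∫ x, s x * s' x * s'' x ∂ν) * ∫ t, t ^ 3 / 8 ∂𝕌 :=
          integral_prod_mul (fun x => s x * s' x * s'' x) (fun t => t ^ 3 / 8)
    _ = _ := by rw [integral_div, integral_pow_uniform]; ring

end SignLift

section SignSpace

def boolSign (b : Bool) : ℝ := if b then 1 else -1

noncomputable def signSpace (p : I) : Measure (Bool × Bool × Bool) :=
  Ber(true, false, half).prod (Ber(true, false, half).prod Ber(true, false, p))

instance (p : I) : IsProbabilityMeasure (signSpace p) := by unfold signSpace; infer_instance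

lemma integral_signSpace (p : I) (f : Bool × Bool × Bool → ℝ) :
    ∫ x, f x ∂signSpace p =
      ∑ a : Bool, ∑ b : Bool, (p * f (a, b, true) + (1 - p) * f (a, b, false)) / 4 := by
  simp [signSpace, integral_prod _ (Integrable.of_finite), integral_bernoulliMeasure, half]
  ring

def sign (i : Fin 3) (x : Bool × Bool × Bool) : ℝ :=
  ![boolSign x.1, boolSign x.2.1, boolSign x.1 * boolSign x.2.1 * boolSign x.2.2] i

lemma measurable_sign (i : Fin 3) : Measurable (sign i) := .of_discrete

lemma sign_eq_one_or_eq_neg_one (i : Fin 3) (x : Bool × Bool × Bool) :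
    sign i x = 1 ∨ sign i x = -1 := by
  obtain ⟨a, b, c⟩ := x
  fin_cases i <;> cases a <;> cases b <;> cases c <;> norm_num [sign, boolSign]

variable (p : I)

lemma integral_sign (i : Fin 3) : ∫ x, sign i x ∂signSpace p = 0 := by
  fin_cases i <;> simp [integral_signSpace, sign, boolSign] <;> ring

lemma integral_sign_mul_sign {i j : Fin 3} (hij : i ≠ j) :
    ∫ x, sign i x * sign j x ∂signSpace p = 0 := by
  fin_cases i <;> fin_cases j <;> simp_all [integral_signSpace, sign, boolSign] <;> ring

lemma integral_sign_mul_sign_mul_sign :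
    ∫ x, sign 0 x * sign 1 x * sign 2 x ∂signSpace p = 2 * p - 1 := by
  simp [integral_signSpace, sign, boolSign]; ring

lemma map_signLift_sign (i : Fin 3) : ((signSpace p).prod 𝕌).map (signLift (sign i)) = 𝕌 :=
  map_signLift (measurable_sign i) (sign_eq_one_or_eq_neg_one i) (integral_sign p i)

end SignSpace

/-- for every `r ∈ [−1,1]` there exist three uniform-on-`[0,1]` random
variables with all pairwise Spearman rank correlations zero and standardized rank
coskewness `32·E[(U₁−1/2)(U₂−1/2)(U₃−1/2)] = r`. -/
theorem stmt11 (r : ℝ) (hr : r ∈ Set.Icc (-1 : ℝ) 1) :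
    ∃ (Ω : Type) (_ : MeasurableSpace Ω) (P : Measure Ω) (_ : IsProbabilityMeasure P)
      (U₁ U₂ U₃ : Ω → ℝ), Measurable U₁ ∧ Measurable U₂ ∧ Measurable U₃ ∧
      P.map U₁ = volume.restrict (Set.Icc (0:ℝ) 1) ∧
      P.map U₂ = volume.restrict (Set.Icc (0:ℝ) 1) ∧
      P.map U₃ = volume.restrict (Set.Icc (0:ℝ) 1) ∧
      (∫ ω, (U₁ ω - 1/2) * (U₂ ω - 1/2) ∂P = 0) ∧
      (∫ ω, (U₁ ω - 1/2) * (U₃ ω - 1/2) ∂P = 0) ∧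
      (∫ ω, (U₂ ω - 1/2) * (U₃ ω - 1/2) ∂P = 0) ∧
      32 * ∫ ω, (U₁ ω - 1/2) * (U₂ ω - 1/2) * (U₃ ω - 1/2) ∂P = r := by
  let p : I := ⟨(1 + r) / 2, by linarith [hr.1], by linarith [hr.2]⟩
  have hp : 2 * (p : ℝ) - 1 = r := by simp only [p]; ring
  refine ⟨(Bool × Bool × Bool) × ℝ, inferInstance, (signSpace p).prod 𝕌, inferInstance,
    signLift (sign 0), signLift (sign 1), signLift (sign 2),
    measurable_signLift (measurable_sign 0), measurable_signLift (measurable_sign 1),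
    measurable_signLift (measurable_sign 2),
    map_signLift_sign p 0, map_signLift_sign p 1, map_signLift_sign p 2, ?_, ?_, ?_, ?_⟩
  · rw [integral_signLift_mul, integral_sign_mul_sign p (by decide), zero_div]
  · rw [integral_signLift_mul, integral_sign_mul_sign p (by decide), zero_div]
  · rw [integral_signLift_mul, integral_sign_mul_sign p (by decide), zero_div]
  · rw [integral_signLift_mul_mul, integral_sign_mul_sign_mul_sign, hp]; ring
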